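/- arXiv:2203.09967 — 8 statements merged into one kernel-verified Lean document; each statement's English description precedes it below -/
import Mathlib

section
/- Let A → B be a ring extension and let C be an intermediate ring with C contained in the saturation of A in B. Then for any two prime ideals p₁, p₂ of B lying over the same prime ideal of A, we have p₁ ∩ C = p₂ ∩ C. -/
open TensorProduct

/-- The saturation of `A` in `B`: elements `b` of `B` such that `b ⊗ 1 - 1 ⊗ b` is
nilpotent in `B ⊗[A] B`. -/
def saturation (A : Type*) {B : Type*} [CommRing A] [CommRing B] [Algebra A B] : Set B :=
  {b | IsNilpotent (b ⊗ₜ[A] (1 : B) - (1 : B) ⊗ₜ[A] b)}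

/-- The induced map on residue fields `k(p ∩ A) → k(p)` associated to a ring
homomorphism `f : A →+* B` and a prime `p` of `B`. -/
noncomputable def residueFieldMap {A B : Type*} [CommRing A] [CommRing B] (f : A →+* B)
    (p : Ideal B) [p.IsPrime] :
    IsLocalRing.ResidueField (Localization.AtPrime (p.comap f)) →+*
      IsLocalRing.ResidueField (Localization.AtPrime p) :=
  haveI := Localization.isLocalHom_localRingHom (p.comap f) p f rfl
  IsLocalRing.ResidueField.map (Localization.localRingHom (p.comap f) p f rfl)

/-- A ring homomorphism `f : A →+* B` is equiresidual if for every prime `p` of `B`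
the induced residue field extension `k(p ∩ A) → k(p)` is an isomorphism. -/
def Equiresidual {A B : Type*} [CommRing A] [CommRing B] (f : A →+* B) : Prop :=
  ∀ (p : Ideal B) (hp : p.IsPrime),
    Function.Bijective (@residueFieldMap _ _ _ _ f p hp)

/-! Two primes `p₁, p₂` of `B` over the same prime `q` of `A` are both the restriction of a
single prime `P` of `B ⊗[A] B`: pull back any prime of `κ(p₁) ⊗[κ(q)] κ(p₂)`, which is nonzero
as a tensor product of nonzero vector spaces, and whose primes restrict to `0` in the fields
`κ(pᵢ)`. For `c` in the saturation, `c ⊗ 1 - 1 ⊗ c` is nilpotent, hence lies in `P`, so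
`c ∈ p₁ ↔ c ⊗ 1 ∈ P ↔ 1 ⊗ c ∈ P ↔ c ∈ p₂`. -/

open Algebra.TensorProduct

theorem Ideal.mem_iff_mem_of_isNilpotent_sub {R : Type*} [CommRing R] (P : Ideal R)
    [P.IsPrime] {x y : R} (h : IsNilpotent (x - y)) : x ∈ P ↔ y ∈ P := by
  have hxy : x - y ∈ P := nilradical_le_prime P (mem_nilradical.mpr h)
  constructor
  · intro hx; simpa using P.sub_mem hx hxy
  · intro hy; simpa using P.add_mem hxy hy

theorem exists_isPrime_comap_includeLeft_eq_comap_of_comp_eq {A B R : Type*} [CommRing A]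
    [CommRing B] [CommRing R] [Algebra A B] (g₁ g₂ : B →+* R)
    (hg : g₁.comp (algebraMap A B) = g₂.comp (algebraMap A B)) (m : Ideal R) [m.IsPrime] :
    ∃ P : Ideal (B ⊗[A] B), P.IsPrime ∧
      P.comap (includeLeft : B →ₐ[A] B ⊗[A] B) = m.comap g₁ ∧
      P.comap (includeRight : B →ₐ[A] B ⊗[A] B) = m.comap g₂ := by
  let : Algebra A R := (g₁.comp (algebraMap A B)).toAlgebra
  let G₁ : B →ₐ[A] R := { g₁ with commutes' := fun _ => rfl }
  let G₂ : B →ₐ[A] R := { g₂ with commutes' := fun a => (RingHom.congr_fun hg a).symm }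
  refine ⟨m.comap (productMap G₁ G₂), inferInstance, ?_, ?_⟩
  · ext b; simp [G₁]
  · ext b; simp [G₂]

theorem exists_isPrime_comap_includeLeft_eq {A B : Type*} [CommRing A] [CommRing B]
    [Algebra A B] (p₁ p₂ : Ideal B) [p₁.IsPrime] [p₂.IsPrime]
    (h : p₁.comap (algebraMap A B) = p₂.comap (algebraMap A B)) :
    ∃ P : Ideal (B ⊗[A] B), P.IsPrime ∧
      P.comap (includeLeft : B →ₐ[A] B ⊗[A] B) = p₁ ∧
      P.comap (includeRight : B →ₐ[A] B ⊗[A] B) = p₂ := by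
  set q := p₁.comap (algebraMap A B)
  let := (Ideal.ResidueField.map q p₁ (algebraMap A B) rfl).toAlgebra
  let := (Ideal.ResidueField.map q p₂ (algebraMap A B) h).toAlgebra
  let T := p₁.ResidueField ⊗[q.ResidueField] p₂.ResidueField
  have : Nontrivial T :=
    nontrivial_of_algebraMap_injective_of_flat_left _ _ _ (RingHom.injective _)
  obtain ⟨m, hm⟩ := Ideal.exists_maximal T
  let g₁ : B →+* T := includeLeftRingHom.comp (algebraMap B p₁.ResidueField)
  let g₂ : B →+* T := (includeRight : p₂.ResidueField →ₐ[q.ResidueField] T).toRingHom.comp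
    (algebraMap B p₂.ResidueField)
  have hg : g₁.comp (algebraMap A B) = g₂.comp (algebraMap A B) := by
    ext a
    have h₁ := Ideal.ResidueField.map_algebraMap q p₁ (algebraMap A B) rfl a
    have h₂ := Ideal.ResidueField.map_algebraMap q p₂ (algebraMap A B) h a
    simp only [g₁, g₂, RingHom.comp_apply, ← h₁, ← h₂]
    exact RingHom.congr_fun includeLeftRingHom_comp_algebraMap _
  have comap_m (p : Ideal B) [p.IsPrime] (f : p.ResidueField →+* T) :
      m.comap (f.comp (algebraMap B p.ResidueField)) = p := by
    rw [← Ideal.comap_comap, Ideal.eq_bot_of_prime (m.comap f), ← RingHom.ker_eq_comap_bot,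
      Ideal.ker_algebraMap_residueField]
  obtain ⟨P, hP, hP₁, hP₂⟩ := exists_isPrime_comap_includeLeft_eq_comap_of_comp_eq g₁ g₂ hg m
  exact ⟨P, hP, hP₁.trans (comap_m p₁ _), hP₂.trans (comap_m p₂ _)⟩

/-- If `C` is an intermediate ring between `A` and `B` contained in the saturation of
`A` in `B`, then any two primes of `B` lying over the same prime of `A` contract to the
same prime of `C`. -/
theorem comap_eq_of_subset_saturation {A B : Type*} [CommRing A] [CommRing B] [Algebra A B]
    (C : Subalgebra A B) (hC : (C : Set B) ⊆ saturation A)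
    (p₁ p₂ : Ideal B) (hp₁ : p₁.IsPrime) (hp₂ : p₂.IsPrime)
    (h : p₁.comap (algebraMap A B) = p₂.comap (algebraMap A B)) :
    p₁.comap C.val = p₂.comap C.val := by
  obtain ⟨P, hP, rfl, rfl⟩ := exists_isPrime_comap_includeLeft_eq p₁ p₂ h
  ext c
  exact P.mem_iff_mem_of_isNilpotent_sub (hC c.2)
end

section
/- Let A → C → B be a sequence of ring extensions. If for every field K, any two ring homomorphisms ψ₁, ψ₂ : B → K agreeing on A also agree on C, then C is contained in the saturation of A in B. -/
universe u v

open TensorProduct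

/-- If every pair of homomorphisms `B → K` into a field agreeing on `A` also agree on
the intermediate ring `C`, then `C` is contained in the saturation of `A` in `B`. -/
theorem subset_saturation_of_homs_agree {A : Type u} {B : Type v}
    [CommRing A] [CommRing B] [Algebra A B] (C : Subalgebra A B)
    (h : ∀ (K : Type max u v) [Field K] (ψ₁ ψ₂ : B →+* K),
      ψ₁.comp (algebraMap A B) = ψ₂.comp (algebraMap A B) → ∀ c ∈ C, ψ₁ c = ψ₂ c) :
    (C : Set B) ⊆ saturation A := by
  intro c hc
  rw [saturation, Set.mem_setOf_eq, nilpotent_iff_mem_prime]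
  intro J hJ
  haveI := hJ
  let Q := (B ⊗[A] B) ⧸ J
  let K0 := FractionRing Q
  let e : K0 ≃+* ULift.{u} K0 := (ULift.ringEquiv).symm
  let g : (B ⊗[A] B) →+* ULift.{u} K0 :=
    (e.toRingHom.comp (algebraMap Q K0)).comp (Ideal.Quotient.mk J)
  have hg : Function.Injective (e.toRingHom.comp (algebraMap Q K0)) :=
    e.injective.comp (IsFractionRing.injective Q K0)
  have key := h (ULift.{u} K0)
    (g.comp (Algebra.TensorProduct.includeLeft : B →ₐ[A] B ⊗[A] B).toRingHom)
    (g.comp (Algebra.TensorProduct.includeRight : B →ₐ[A] B ⊗[A] B).toRingHom)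
    (by
      refine RingHom.ext fun a => ?_
      show g _ = g _
      congr 1
      show (algebraMap A B) a ⊗ₜ[A] (1:B) = (1:B) ⊗ₜ[A] (algebraMap A B) a
      rw [Algebra.algebraMap_eq_smul_one, smul_tmul])
    c hc
  simp only [RingHom.comp_apply] at key
  have : g (c ⊗ₜ[A] (1:B) - (1:B) ⊗ₜ[A] c) = 0 := by
    rw [map_sub, sub_eq_zero]
    exact key
  rw [← Ideal.Quotient.eq_zero_iff_mem]
  have : (e.toRingHom.comp (algebraMap Q K0)) (Ideal.Quotient.mk J (c ⊗ₜ[A] (1:B) - (1:B) ⊗ₜ[A] c)) = (e.toRingHom.comp (algebraMap Q K0)) 0 := by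
    rw [map_zero]; exact this
  exact hg this
end

section
/- Let A → C → B be a sequence of ring extensions. Then C ⊆ Â_B (saturation of A in B) if and only if the kernel of the multiplication map C⊗_A C → C has image contained in the nilradical of B⊗_A B under the natural map C⊗_A C → B⊗_A B. -/
open TensorProduct

set_option synthInstance.maxHeartbeats 1000000 in
/-- `C ⊆ Â_B` if and only if the kernel of the multiplication map `C ⊗[A] C → C` is
mapped into the nilradical of `B ⊗[A] B` by the natural map `C ⊗[A] C → B ⊗[A] B`. -/
theorem subset_saturation_iff_ker_mul_nilpotent {A B : Type*} [CommRing A] [CommRing B]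
    [Algebra A B] (C : Subalgebra A B) :
    (C : Set B) ⊆ saturation A ↔
      ∀ x ∈ RingHom.ker (Algebra.TensorProduct.lmul' A (S := C)),
        (Algebra.TensorProduct.map C.val C.val) x ∈ nilradical (B ⊗[A] B) := by
  constructor
  · intro h x hx
    have hx' : x ∈ KaehlerDifferential.ideal A C := hx
    rw [← KaehlerDifferential.span_range_eq_ideal] at hx'
    refine Submodule.span_induction (p := fun y _ => (Algebra.TensorProduct.map C.val C.val) y ∈ nilradical (B ⊗[A] B)) ?_ ?_ ?_ ?_ hx'
    · rintro _ ⟨c, rfl⟩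
      simp only [map_sub, Algebra.TensorProduct.map_tmul, map_one, Subalgebra.coe_val]
      rw [mem_nilradical, show (1:B) ⊗ₜ[A] (c:B) - (c:B) ⊗ₜ[A] 1
          = -((c:B) ⊗ₜ[A] 1 - 1 ⊗ₜ[A] (c:B)) by ring]
      exact (h c.2).neg
    · simp
    · intro a b _ _ ha hb
      rw [map_add]; exact add_mem ha hb
    · intro a b _ hb
      rw [smul_eq_mul, map_mul]
      exact Ideal.mul_mem_left _ _ hb
  · intro h b hb
    have hk : ((⟨b, hb⟩ : C) ⊗ₜ[A] (1 : C) - (1 : C) ⊗ₜ[A] ⟨b, hb⟩)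
        ∈ RingHom.ker (Algebra.TensorProduct.lmul' A (S := C)) := by
      simp [RingHom.mem_ker]
    have := h _ hk
    simpa [saturation, mem_nilradical] using this
end

section
/- Let A → B be a ring extension with A ⊆ B. Then the seminormalization A⁺_B of A in B is contained in the saturation Â_B of A in B. -/
open TensorProduct

/-- The extension `A → B` is subintegral: integral, bijective on prime spectra,
and equiresidual. -/
def IsSubintegralExt (A B : Type*) [CommRing A] [CommRing B] [Algebra A B] : Prop :=
  Algebra.IsIntegral A B ∧
    Function.Bijective (PrimeSpectrum.comap (algebraMap A B)) ∧
    Equiresidual (algebraMap A B)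

/-- `S` is the seminormalization of `A` in `B` : `A → S` is subintegral and `S` is
the greatest intermediate ring which is subintegral over `A`. -/
def IsSeminormalization {A B : Type*} [CommRing A] [CommRing B] [Algebra A B]
    (S : Subalgebra A B) : Prop :=
  IsSubintegralExt A S ∧ ∀ C : Subalgebra A B, IsSubintegralExt A C → C ≤ S

/-!
Since `A → A⁺_B` is subintegral, it is injective on spectra and equiresidual, so two ring maps
from `A⁺_B` to a field that agree on `A` have the same kernel `p` and then both factor through
`κ(p)`, which is the image of `κ(p ∩ A)`: they are equal. Applying this to the two
maps `A⁺_B → κ(q)` for every prime `q` of `A⁺_B ⊗[A] A⁺_B` shows that `s ⊗ 1 - 1 ⊗ s` lies in all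
primes, hence is nilpotent; its image in `B ⊗[A] B` is then nilpotent as well.
-/

lemma RingHom.exists_residueField_lift {S K : Type*} [CommRing S] [Field K] (φ : S →+* K)
    (p : Ideal S) [p.IsPrime] (hp : RingHom.ker φ = p) :
    ∃ ψ : p.ResidueField →+* K, ψ.comp (algebraMap S p.ResidueField) = φ := by
  subst hp
  have hunit : (RingHom.ker φ).primeCompl ≤ (IsUnit.submonoid K).comap φ := fun y hy ↦
    isUnit_iff_ne_zero.mpr fun h ↦ hy (RingHom.mem_ker.mpr h)
  exact ⟨Ideal.ResidueField.lift _ φ le_rfl hunit,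
    RingHom.ext (Ideal.ResidueField.lift_algebraMap _ φ le_rfl hunit)⟩

lemma residueFieldMap_comp_algebraMap {A S : Type*} [CommRing A] [CommRing S] (f : A →+* S)
    (p : Ideal S) [p.IsPrime] :
    (residueFieldMap f p).comp (algebraMap A (p.comap f).ResidueField) =
      (algebraMap S p.ResidueField).comp f :=
  RingHom.ext (Ideal.ResidueField.map_algebraMap (p.comap f) p f rfl)

theorem RingHom.ext_of_comap_injective_of_equiresidual {A S K : Type*} [CommRing A]
    [CommRing S] [Field K] {f : A →+* S} (hspec : Function.Injective (PrimeSpectrum.comap f))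
    (hres : Equiresidual f) {φ₁ φ₂ : S →+* K} (h : φ₁.comp f = φ₂.comp f) : φ₁ = φ₂ := by
  set p := RingHom.ker φ₁
  have : p.IsPrime := RingHom.ker_isPrime φ₁
  have hker : RingHom.ker φ₂ = p := by
    have hcomap : (RingHom.ker φ₂).comap f = p.comap f := by
      rw [RingHom.comap_ker, RingHom.comap_ker, h]
    exact congrArg PrimeSpectrum.asIdeal
      (hspec (a₁ := ⟨_, RingHom.ker_isPrime φ₂⟩) (a₂ := ⟨p, RingHom.ker_isPrime φ₁⟩)
        (PrimeSpectrum.ext hcomap))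
  obtain ⟨ψ₁, hψ₁⟩ := φ₁.exists_residueField_lift p rfl
  obtain ⟨ψ₂, hψ₂⟩ := φ₂.exists_residueField_lift p hker
  rw [← hψ₁, ← hψ₂] at h
  have hcomp : ψ₁.comp (residueFieldMap f p) = ψ₂.comp (residueFieldMap f p) := by
    refine Ideal.ResidueField.ringHom_ext ?_
    simpa only [RingHom.comp_assoc, residueFieldMap_comp_algebraMap] using h
  have hψ : ψ₁ = ψ₂ := RingHom.ext fun x ↦ by
    obtain ⟨y, rfl⟩ := (hres p this).2 x
    exact RingHom.congr_fun hcomp y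
  rw [← hψ₁, ← hψ₂, hψ]

lemma saturation_eq_univ {A S : Type*} [CommRing A] [CommRing S] [Algebra A S]
    (hspec : Function.Injective (PrimeSpectrum.comap (algebraMap A S)))
    (hres : Equiresidual (algebraMap A S)) : saturation A = (Set.univ : Set S) := by
  refine Set.eq_univ_of_forall fun s ↦ (nilpotent_iff_mem_prime).mpr fun q hq ↦ ?_
  let κ : S ⊗[A] S →+* q.ResidueField := algebraMap _ _
  have hκ : κ.comp (Algebra.TensorProduct.includeLeft : S →ₐ[A] S ⊗[A] S).toRingHom =
      κ.comp (Algebra.TensorProduct.includeRight : S →ₐ[A] S ⊗[A] S).toRingHom :=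
    RingHom.ext_of_comap_injective_of_equiresidual hspec hres <| RingHom.ext fun a ↦ by
      simp only [RingHom.comp_apply, AlgHom.toRingHom_eq_coe, RingHom.coe_coe, AlgHom.commutes]
  rw [← Ideal.algebraMap_residueField_eq_zero, map_sub, sub_eq_zero]
  exact RingHom.congr_fun hκ s

lemma AlgHom.map_mem_saturation {A S B : Type*} [CommRing A] [CommRing S] [CommRing B]
    [Algebra A S] [Algebra A B] (g : S →ₐ[A] B) {s : S} (hs : s ∈ saturation A) :
    g s ∈ saturation A := by
  simpa [saturation, Algebra.TensorProduct.map_tmul] using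
    hs.map (Algebra.TensorProduct.map g g)

theorem seminormalization_subset_saturation_general {A B : Type*} [CommRing A] [CommRing B]
    [Algebra A B]
    (S : Subalgebra A B) (hS : IsSeminormalization S) :
    (S : Set B) ⊆ saturation A := by
  obtain ⟨⟨-, hspec, hres⟩, -⟩ := hS
  intro b hb
  have hsat : (⟨b, hb⟩ : S) ∈ saturation A := by
    rw [saturation_eq_univ hspec.1 hres]
    trivial
  exact S.val.map_mem_saturation hsat

/-- The seminormalization `A⁺_B` of `A` in `B` is contained in the saturation `Â_B`. -/
theorem seminormalization_subset_saturation {A B : Type*} [CommRing A] [CommRing B]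
    [Algebra A B] (hinj : Function.Injective (algebraMap A B))
    (S : Subalgebra A B) (hS : IsSeminormalization S) :
    (S : Set B) ⊆ saturation A :=
  seminormalization_subset_saturation_general S hS
end

section
/- Let A = k[x,y]/(y²−x²(x+1)) be the coordinate ring of a nodal cubic over an algebraically closed field k of characteristic zero, A' = A[z] with z = y/x (so A' = k[x,z]/(z²−x−1)), and B = A'[1/(z−1)]. Then the element α = z⊗1 − 1⊗z in B⊗_A B is zero; in particular the extension A → B is radicial, so the saturation of A in B equals B. -/
open TensorProduct

/-- In the nodal curve example `A = k[x,y]/(y² - x²(x+1))`,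
`B = A'[1/(z-1)]` where `A' = A[z] = k[x,z]/(z² - (x+1))` with `y = xz`:
the element `α = z ⊗ 1 - 1 ⊗ z` of `B ⊗[A] B` is zero, and the extension `A → B` is
radicial, i.e. the saturation of `A` in `B` is all of `B` (every `b ⊗ 1 - 1 ⊗ b` is
nilpotent in `B ⊗[A] B`). -/
theorem nodal_curve_saturation {k A B : Type*} [Field k] [IsAlgClosed k] [CharZero k]
    [CommRing A] [CommRing B] [Algebra k A] [Algebra k B] [Algebra A B]
    [IsScalarTower k A B]
    (x y : A) (z s : B)
    (hgenA : Algebra.adjoin k {x, y} = ⊤)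
    (hrelA : y ^ 2 = x ^ 2 * (x + 1))
    (hy : algebraMap A B y = algebraMap A B x * z)
    (hz : z ^ 2 = algebraMap A B x + 1)
    (hs : s * (z - 1) = 1)
    (hgenB : Algebra.adjoin A {z, s} = ⊤) :
    z ⊗ₜ[A] (1 : B) - (1 : B) ⊗ₜ[A] z = 0 ∧
      ∀ b : B, IsNilpotent (b ⊗ₜ[A] (1 : B) - (1 : B) ⊗ₜ[A] b) := by
  -- `x • α = 0` since `x • z = y` in `B` and scalars move across the tensor.
  have hxz : x • z = algebraMap A B y := by
    rw [Algebra.smul_def, hy]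
  have key0 : x • (z ⊗ₜ[A] (1 : B) - (1 : B) ⊗ₜ[A] z) = 0 := by
    rw [smul_sub, TensorProduct.smul_tmul', ← TensorProduct.tmul_smul, hxz,
      Algebra.algebraMap_eq_smul_one (R := A) (A := B) y,
      TensorProduct.smul_tmul, sub_self]
  -- `(z+1) = x • s` in `B`
  have hxs : x • s = z + 1 := by
    rw [Algebra.smul_def]
    linear_combination (z + 1) * hs - s * hz
  -- `α * (z ⊗ 1 + 1 ⊗ z) = 0`
  have e1 : (z ⊗ₜ[A] (1 : B)) * (z ⊗ₜ[A] (1 : B))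
      = ((1 : B) ⊗ₜ[A] z) * ((1 : B) ⊗ₜ[A] z) := by
    simp only [Algebra.TensorProduct.tmul_mul_tmul, one_mul, mul_one]
    have hzz : z * z = x • (1 : B) + 1 := by
      rw [← pow_two, hz, Algebra.smul_def, mul_one]
    rw [hzz, TensorProduct.add_tmul, TensorProduct.tmul_add, TensorProduct.smul_tmul]
  have hαw : (z ⊗ₜ[A] (1 : B) - (1 : B) ⊗ₜ[A] z)
      * (z ⊗ₜ[A] (1 : B) + (1 : B) ⊗ₜ[A] z) = 0 := by
    linear_combination e1
  -- `α * ((z+1) ⊗ 1) = 0` and `α * (1 ⊗ (z+1)) = 0`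
  have h1 : (z ⊗ₜ[A] (1 : B) - (1 : B) ⊗ₜ[A] z) * (z ⊗ₜ[A] (1 : B) + 1) = 0 := by
    have : (z ⊗ₜ[A] (1 : B) - (1 : B) ⊗ₜ[A] z) * ((x • s) ⊗ₜ[A] (1 : B)) = 0 := by
      rw [← TensorProduct.smul_tmul', mul_smul_comm, ← smul_mul_assoc, key0, zero_mul]
    rw [hxs, TensorProduct.add_tmul, ← Algebra.TensorProduct.one_def] at this
    exact this
  have h2 : (z ⊗ₜ[A] (1 : B) - (1 : B) ⊗ₜ[A] z) * (1 + (1 : B) ⊗ₜ[A] z) = 0 := by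
    have : (z ⊗ₜ[A] (1 : B) - (1 : B) ⊗ₜ[A] z) * ((1 : B) ⊗ₜ[A] (x • s)) = 0 := by
      rw [TensorProduct.tmul_smul, mul_smul_comm, ← smul_mul_assoc, key0, zero_mul]
    rw [hxs, TensorProduct.tmul_add, ← Algebra.TensorProduct.one_def, add_comm] at this
    exact this
  -- hence `2 • α = 0`
  have h2a : (2 : A) • (z ⊗ₜ[A] (1 : B) - (1 : B) ⊗ₜ[A] z) = 0 := by
    rw [two_smul]
    linear_combination h1 + h2 - hαw
  -- `2` is invertible in `A` since `char k = 0`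
  have hα : z ⊗ₜ[A] (1 : B) - (1 : B) ⊗ₜ[A] z = 0 := by
    have hc : algebraMap k A (2⁻¹) * (2 : A) = 1 := by
      have h2A : (2 : A) = algebraMap k A 2 := by
        rw [map_ofNat]
      rw [h2A, ← map_mul, inv_mul_cancel₀ (two_ne_zero), map_one]
    calc z ⊗ₜ[A] (1 : B) - (1 : B) ⊗ₜ[A] z
        = (algebraMap k A (2⁻¹) * (2 : A)) • (z ⊗ₜ[A] (1 : B) - (1 : B) ⊗ₜ[A] z) := by
          rw [hc, one_smul]
      _ = algebraMap k A (2⁻¹) • ((2 : A) • (z ⊗ₜ[A] (1 : B) - (1 : B) ⊗ₜ[A] z)) := by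
          rw [mul_smul]
      _ = 0 := by rw [h2a, smul_zero]
  refine ⟨hα, ?_⟩
  -- second part: every `b ⊗ 1 - 1 ⊗ b` is in fact zero
  have hzz : z ⊗ₜ[A] (1 : B) = (1 : B) ⊗ₜ[A] z := by linear_combination hα
  have hss : s ⊗ₜ[A] (1 : B) = (1 : B) ⊗ₜ[A] s := by
    have hs1 : (s ⊗ₜ[A] (1 : B)) * (z ⊗ₜ[A] (1 : B) - 1) = 1 := by
      simp only [Algebra.TensorProduct.one_def, mul_sub, Algebra.TensorProduct.tmul_mul_tmul,
        mul_one, one_mul, ← TensorProduct.sub_tmul]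
      rw [show s * z - s = (1 : B) from by linear_combination hs]
    have hs2 : ((1 : B) ⊗ₜ[A] s) * ((1 : B) ⊗ₜ[A] z - 1) = 1 := by
      simp only [Algebra.TensorProduct.one_def, mul_sub, Algebra.TensorProduct.tmul_mul_tmul,
        mul_one, one_mul, ← TensorProduct.tmul_sub]
      rw [show s * z - s = (1 : B) from by linear_combination hs]
    linear_combination ((1 : B) ⊗ₜ[A] s) * hs1 - (s ⊗ₜ[A] (1 : B)) * hs2
      - (((1 : B) ⊗ₜ[A] s) * (s ⊗ₜ[A] (1 : B))) * hα
  have main : ∀ b : B, b ⊗ₜ[A] (1 : B) = (1 : B) ⊗ₜ[A] b := by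
    intro b
    have hb : b ∈ Algebra.adjoin A ({z, s} : Set B) := by rw [hgenB]; trivial
    induction hb using Algebra.adjoin_induction with
    | mem c hc =>
      rcases hc with rfl | rfl
      · exact hzz
      · exact hss
    | algebraMap a =>
      rw [Algebra.algebraMap_eq_smul_one (R := A) (A := B) a, TensorProduct.smul_tmul]
    | add a b _ _ ha hb =>
      rw [TensorProduct.add_tmul, TensorProduct.tmul_add, ha, hb]
    | mul a b _ _ ha hb =>
      have : (a * b) ⊗ₜ[A] (1 : B) = (a ⊗ₜ[A] (1 : B)) * (b ⊗ₜ[A] (1 : B)) := by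
        rw [Algebra.TensorProduct.tmul_mul_tmul, mul_one]
      rw [this, ha, hb, Algebra.TensorProduct.tmul_mul_tmul, mul_one]
  intro b
  rw [main b, sub_self]
  exact IsNilpotent.zero
end

section
/- With A = k[x,y]/(y²−x²(x+1)) and B = A'[1/(z−1)] as in the nodal-curve example (z = y/x), the element β = s⊗1 − 1⊗s in B⊗_A B is zero, where s = 1/(z−1). Hence for any n ≥ 0, the saturation of A[t₁,…,tₙ] in B[t₁,…,tₙ] equals B[t₁,…,tₙ]. -/
open TensorProduct

/-- The natural algebra structure of `B[t₁,…,tₙ]` over `A[t₁,…,tₙ]` induced by an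
algebra structure of `B` over `A`. -/
noncomputable instance mvPolynomialAlgebra {A B : Type*} [CommRing A] [CommRing B]
    [Algebra A B] (n : ℕ) :
    Algebra (MvPolynomial (Fin n) A) (MvPolynomial (Fin n) B) :=
  (MvPolynomial.map (algebraMap A B)).toAlgebra

section Aux

variable (A B : Type*) [CommRing A] [CommRing B] [Algebra A B]

lemma swap_tmul (a : A) :
    (algebraMap A B a) ⊗ₜ[A] (1 : B) = (1 : B) ⊗ₜ[A] (algebraMap A B a) := by
  rw [Algebra.algebraMap_eq_smul_one, smul_tmul]

/-- The subalgebra of elements `b` with `b ⊗ 1 = 1 ⊗ b`. -/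
def diagSub : Subalgebra A B where
  carrier := {b | b ⊗ₜ[A] (1 : B) = (1 : B) ⊗ₜ[A] b}
  mul_mem' := by
    intro a b ha hb
    show (a * b) ⊗ₜ[A] (1 : B) = (1 : B) ⊗ₜ[A] (a * b)
    have h1 : (a * b) ⊗ₜ[A] (1 : B) = (a ⊗ₜ[A] (1 : B)) * (b ⊗ₜ[A] (1 : B)) := by
      rw [Algebra.TensorProduct.tmul_mul_tmul, mul_one]
    have h2 : (1 : B) ⊗ₜ[A] (a * b) = ((1 : B) ⊗ₜ[A] a) * ((1 : B) ⊗ₜ[A] b) := by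
      rw [Algebra.TensorProduct.tmul_mul_tmul, mul_one]
    rw [h1, h2, ha, hb]
  one_mem' := rfl
  add_mem' := by
    intro a b ha hb
    show (a + b) ⊗ₜ[A] (1 : B) = (1 : B) ⊗ₜ[A] (a + b)
    rw [TensorProduct.add_tmul, TensorProduct.tmul_add, ha, hb]
  zero_mem' := by simp
  algebraMap_mem' := swap_tmul A B

lemma mem_diagSub {b : B} : b ∈ diagSub A B ↔ b ⊗ₜ[A] (1 : B) = (1 : B) ⊗ₜ[A] b :=
  Iff.rfl

variable {A B}

/-- Key computation: with the nodal-curve relations (and `2` invertible),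
`z ⊗ 1 = 1 ⊗ z` and `s ⊗ 1 = 1 ⊗ s` in `B ⊗[A] B`. -/
lemma key_computation (x y : A) (z s h : B)
    (hy : algebraMap A B x * z = algebraMap A B y)
    (hz : z ^ 2 = algebraMap A B x + 1)
    (hs : s * (z - 1) = 1)
    (hh : 2 * h = 1) :
    z ∈ diagSub A B ∧ s ∈ diagSub A B := by
  -- atoms in B ⊗[A] B
  set P : B ⊗[A] B := z ⊗ₜ[A] (1 : B) with hPdef
  set Q : B ⊗[A] B := (1 : B) ⊗ₜ[A] z with hQdef
  set S : B ⊗[A] B := s ⊗ₜ[A] (1 : B) with hSdef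
  set T : B ⊗[A] B := (1 : B) ⊗ₜ[A] s with hTdef
  set c1 : B ⊗[A] B := (algebraMap A B x) ⊗ₜ[A] (1 : B) with hc1def
  set c2 : B ⊗[A] B := (1 : B) ⊗ₜ[A] (algebraMap A B x) with hc2def
  set H : B ⊗[A] B := h ⊗ₜ[A] (1 : B) with hHdef
  have hcc : c1 = c2 := swap_tmul A B x
  -- x ⋅ (z ⊗ 1) = x ⋅ (1 ⊗ z)  (both equal y ⊗ 1 = 1 ⊗ y)
  have hxzt : c1 * P = c2 * Q := by
    rw [hc1def, hPdef, hc2def, hQdef, Algebra.TensorProduct.tmul_mul_tmul,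
      Algebra.TensorProduct.tmul_mul_tmul, one_mul, hy]
    exact swap_tmul A B y
  have hP2 : P ^ 2 = c1 + 1 := by
    rw [hPdef, Algebra.TensorProduct.tmul_pow, one_pow, hz, hc1def,
      TensorProduct.add_tmul, Algebra.TensorProduct.one_def]
  have hQ2 : Q ^ 2 = c2 + 1 := by
    rw [hQdef, Algebra.TensorProduct.tmul_pow, one_pow, hz, hc2def,
      TensorProduct.tmul_add, Algebra.TensorProduct.one_def]
  have hsz : s * z = 1 + s := by linear_combination hs
  have hSP : S * P = 1 + S := by
    rw [hSdef, hPdef, Algebra.TensorProduct.tmul_mul_tmul, one_mul, hsz,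
      TensorProduct.add_tmul, Algebra.TensorProduct.one_def]
  have hTQ : T * Q = 1 + T := by
    rw [hTdef, hQdef, Algebra.TensorProduct.tmul_mul_tmul, one_mul, hsz,
      TensorProduct.tmul_add, Algebra.TensorProduct.one_def]
  have hH2 : 2 * H = 1 := by
    have h1 : (2 : B ⊗[A] B) * H = (2 * h) ⊗ₜ[A] (1 : B) := by
      rw [hHdef, two_mul, two_mul, TensorProduct.add_tmul]
    rw [h1, hh, Algebra.TensorProduct.one_def]
  -- the chain of consequences
  have hca : c1 * P = c1 * Q := by linear_combination hxzt - Q * hcc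
  have hcb : c2 * P = c2 * Q := by linear_combination hxzt - P * hcc
  have hPP : (P ^ 2 - 1) * (P - Q) = 0 := by linear_combination (P - Q) * hP2 + hca
  have hQQ : (Q ^ 2 - 1) * (P - Q) = 0 := by linear_combination (P - Q) * hQ2 + hcb
  have h2S : (1 + 2 * S) * (P - Q) = 0 := by
    linear_combination S ^ 2 * hPP - (P - Q) * (S * (P + 1) + 1) * hSP
  have h2T : (1 + 2 * T) * (P - Q) = 0 := by
    linear_combination T ^ 2 * hQQ - (P - Q) * (T * (Q + 1) + 1) * hTQ
  have hPa : (P - 1) * (P - Q) + 2 * (P - Q) = 0 := by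
    linear_combination (P - 1) * h2S - 2 * (P - Q) * hSP
  have hQa : (Q - 1) * (P - Q) + 2 * (P - Q) = 0 := by
    linear_combination (Q - 1) * h2T - 2 * (P - Q) * hTQ
  have h2a : 2 * (P - Q) = 0 := by linear_combination hPa + hQa - hP2 + hQ2 - hcc
  have hzz : P = Q := by linear_combination H * h2a - (P - Q) * hH2
  have hss : S = T := by linear_combination T * hSP - S * hTQ - S * T * hzz
  exact ⟨hzz, hss⟩

end Aux

/-- In the nodal curve example `A = k[x,y]/(y² - x²(x+1))`,
`B = A'[1/(z-1)]` with `A' = A[z]`, `y = xz`, `s = 1/(z-1)`: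
the element `β = s ⊗ 1 - 1 ⊗ s` of `B ⊗[A] B` is zero; hence for every `n ≥ 0` the
saturation of `A[t₁,…,tₙ]` in `B[t₁,…,tₙ]` equals `B[t₁,…,tₙ]`. -/
theorem nodal_curve_saturation_poly {k A B : Type*} [Field k] [IsAlgClosed k] [CharZero k]
    [CommRing A] [CommRing B] [Algebra k A] [Algebra k B] [Algebra A B]
    [IsScalarTower k A B]
    (x y : A) (z s : B)
    (hgenA : Algebra.adjoin k {x, y} = ⊤)
    (hrelA : y ^ 2 = x ^ 2 * (x + 1))
    (hy : algebraMap A B y = algebraMap A B x * z)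
    (hz : z ^ 2 = algebraMap A B x + 1)
    (hs : s * (z - 1) = 1)
    (hgenB : Algebra.adjoin A {z, s} = ⊤) :
    s ⊗ₜ[A] (1 : B) - (1 : B) ⊗ₜ[A] s = 0 ∧
      ∀ n : ℕ, ∀ q : MvPolynomial (Fin n) B,
        IsNilpotent
          (q ⊗ₜ[MvPolynomial (Fin n) A] (1 : MvPolynomial (Fin n) B) -
            (1 : MvPolynomial (Fin n) B) ⊗ₜ[MvPolynomial (Fin n) A] q) := by
  -- a half of 1 in B
  have h2k : (2 : k) ≠ 0 := two_ne_zero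
  set h : B := algebraMap k B (2⁻¹ : k) with hhdef
  have hh : 2 * h = 1 := by
    have h2 : (2 : B) = algebraMap k B (2 : k) := by
      rw [map_ofNat]
    rw [h2, hhdef, ← map_mul, mul_inv_cancel₀ h2k, map_one]
  obtain ⟨hzmem, hsmem⟩ := key_computation x y z s h hy.symm hz hs hh
  have hβ : s ⊗ₜ[A] (1 : B) = (1 : B) ⊗ₜ[A] s := hsmem
  refine ⟨by rw [hβ, sub_self], ?_⟩
  intro n q
  have hmapC : ∀ a : A,
      algebraMap (MvPolynomial (Fin n) A) (MvPolynomial (Fin n) B) (MvPolynomial.C a)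
      = MvPolynomial.C (algebraMap A B a) := by
    intro a
    show MvPolynomial.map (algebraMap A B) (MvPolynomial.C a) = _
    rw [MvPolynomial.map_C]
  -- key computation at the polynomial level
  have hkey' : (MvPolynomial.C z : MvPolynomial (Fin n) B) ∈
        diagSub (MvPolynomial (Fin n) A) (MvPolynomial (Fin n) B) ∧
      (MvPolynomial.C s : MvPolynomial (Fin n) B) ∈
        diagSub (MvPolynomial (Fin n) A) (MvPolynomial (Fin n) B) := by
    refine key_computation (MvPolynomial.C x) (MvPolynomial.C y)
      (MvPolynomial.C z) (MvPolynomial.C s) (MvPolynomial.C h) ?_ ?_ ?_ ?_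
    · rw [hmapC, hmapC, ← map_mul, hy]
    · rw [hmapC, ← map_pow, hz, map_add, map_one]
    · have h1 : (MvPolynomial.C (s * (z - 1)) : MvPolynomial (Fin n) B)
          = MvPolynomial.C (1 : B) := by rw [hs]
      rwa [map_mul, map_sub, map_one] at h1
    · have h1 : (MvPolynomial.C (2 * h) : MvPolynomial (Fin n) B)
          = MvPolynomial.C (1 : B) := by rw [hh]
      rwa [map_mul, map_ofNat, map_one] at h1
  -- the set of b : B with C b in the diagonal subalgebra is a subalgebra of B over A
  have hCdiag : ∀ b : B, (MvPolynomial.C b : MvPolynomial (Fin n) B) ∈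
      diagSub (MvPolynomial (Fin n) A) (MvPolynomial (Fin n) B) := by
    have hD2top : (⊤ : Subalgebra A B) ≤
        { carrier := {b | (MvPolynomial.C b : MvPolynomial (Fin n) B) ∈
            diagSub (MvPolynomial (Fin n) A) (MvPolynomial (Fin n) B)},
          mul_mem' := by
            intro a b ha hb
            show (MvPolynomial.C (a * b) : MvPolynomial (Fin n) B) ∈
              diagSub (MvPolynomial (Fin n) A) (MvPolynomial (Fin n) B)
            rw [map_mul]
            exact mul_mem ha hb
          one_mem' := by
            show (MvPolynomial.C (1 : B) : MvPolynomial (Fin n) B) ∈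
              diagSub (MvPolynomial (Fin n) A) (MvPolynomial (Fin n) B)
            rw [map_one]; exact one_mem _
          add_mem' := by
            intro a b ha hb
            show (MvPolynomial.C (a + b) : MvPolynomial (Fin n) B) ∈
              diagSub (MvPolynomial (Fin n) A) (MvPolynomial (Fin n) B)
            rw [map_add]
            exact add_mem ha hb
          zero_mem' := by
            show (MvPolynomial.C (0 : B) : MvPolynomial (Fin n) B) ∈
              diagSub (MvPolynomial (Fin n) A) (MvPolynomial (Fin n) B)
            rw [map_zero]; exact zero_mem _
          algebraMap_mem' := by
            intro a
            show (MvPolynomial.C (algebraMap A B a) : MvPolynomial (Fin n) B) ∈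
              diagSub (MvPolynomial (Fin n) A) (MvPolynomial (Fin n) B)
            rw [← hmapC]
            exact Subalgebra.algebraMap_mem _ _ } := by
      rw [← hgenB]
      refine Algebra.adjoin_le ?_
      rintro b hb
      rcases hb with hb | hb
      · rw [hb]; exact hkey'.1
      · rw [Set.mem_singleton_iff] at hb
        rw [hb]; exact hkey'.2
    intro b
    exact hD2top (Algebra.mem_top)
  -- every polynomial lies in the diagonal subalgebra
  have hall : ∀ p : MvPolynomial (Fin n) B,
      p ∈ diagSub (MvPolynomial (Fin n) A) (MvPolynomial (Fin n) B) := by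
    intro p
    refine MvPolynomial.induction_on p ?_ ?_ ?_
    · intro b; exact hCdiag b
    · intro p q hp hq; exact add_mem hp hq
    · intro p i hp
      refine mul_mem hp ?_
      have hXi : (MvPolynomial.X i : MvPolynomial (Fin n) B)
          = algebraMap (MvPolynomial (Fin n) A) (MvPolynomial (Fin n) B)
              (MvPolynomial.X i) := by
        show _ = MvPolynomial.map (algebraMap A B) (MvPolynomial.X i)
        rw [MvPolynomial.map_X]
      rw [hXi]
      exact Subalgebra.algebraMap_mem _ _
  have hq : q ⊗ₜ[MvPolynomial (Fin n) A] (1 : MvPolynomial (Fin n) B)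
      = (1 : MvPolynomial (Fin n) B) ⊗ₜ[MvPolynomial (Fin n) A] q := hall q
  exact ⟨1, by rw [pow_one, hq, sub_self]⟩
end

section
/- Let A → B be an extension of commutative rings where B is a domain whose fraction field embeds everything, and suppose A → B is subintegral (integral, Spec-bijective, equiresidual). Then for every b ∈ B, the element b⊗1 − 1⊗b is nilpotent in B⊗_A B. -/
open TensorProduct

/-!
An element is nilpotent iff it lies in every prime `q`. The two inclusions `B → B ⊗[A] B`
pull `q` back to primes of `B` over the same prime of `A`, hence to one prime `P` by
injectivity on spectra. As `k(P ∩ A) → k(P)` is onto, `b ≡ a / s (mod P)` with `a, s ∈ A`,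
`s ∉ P`, and both inclusions send `b` to `a / s` modulo `q`; so `b ⊗ 1 - 1 ⊗ b ∈ q`.
-/

section Radicial

variable {A B : Type*} [CommRing A] [CommRing B]

lemma residueFieldMap_residue_algebraMap (f : A →+* B) (p : Ideal B) [p.IsPrime] (x : A) :
    residueFieldMap f p
        (IsLocalRing.residue _ (algebraMap A (Localization.AtPrime (p.comap f)) x)) =
      IsLocalRing.residue _ (algebraMap B (Localization.AtPrime p) (f x)) := by
  have := Localization.isLocalHom_localRingHom (p.comap f) p f rfl
  rw [residueFieldMap, IsLocalRing.ResidueField.map_residue, Localization.localRingHom_to_map]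

lemma exists_mul_sub_mem_of_surjective_residueFieldMap (f : A →+* B) (p : Ideal B) [p.IsPrime]
    (hsurj : Function.Surjective (residueFieldMap f p)) (b : B) :
    ∃ a s : A, f s ∉ p ∧ b * f s - f a ∈ p := by
  obtain ⟨y, hy⟩ := hsurj (IsLocalRing.residue _ (algebraMap B (Localization.AtPrime p) b))
  obtain ⟨z, rfl⟩ := IsLocalRing.residue_surjective y
  obtain ⟨⟨a, s⟩, rfl⟩ := IsLocalization.mk'_surjective (p.comap f).primeCompl z
  have key := congrArg (residueFieldMap f p ∘ IsLocalRing.residue _)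
    (IsLocalization.mk'_spec' (Localization.AtPrime (p.comap f)) a s)
  simp only [Function.comp_apply, map_mul, residueFieldMap_residue_algebraMap, hy] at key
  refine ⟨a, s, s.2, ?_⟩
  rw [← IsLocalization.AtPrime.to_map_mem_maximal_iff (Localization.AtPrime p) p,
    ← IsLocalRing.residue_eq_zero_iff, map_sub, map_sub, map_mul, map_mul, mul_comm, key,
    sub_self]

variable [Algebra A B] {C : Type*} [CommRing C] [Algebra A C]

lemma comap_eq_of_injective_primeSpectrum_comap
    (hspec : Function.Injective (PrimeSpectrum.comap (algebraMap A B)))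
    (φ₁ φ₂ : B →ₐ[A] C) (q : Ideal C) [q.IsPrime] :
    q.comap φ₁ = q.comap φ₂ := by
  have hA : (q.comap φ₁).comap (algebraMap A B) = (q.comap φ₂).comap (algebraMap A B) := by
    ext x
    simp only [Ideal.mem_comap, AlgHom.commutes]
  exact congrArg PrimeSpectrum.asIdeal
    (hspec (a₁ := ⟨q.comap φ₁, inferInstance⟩) (a₂ := ⟨q.comap φ₂, inferInstance⟩)
      (PrimeSpectrum.ext hA))

lemma sub_mem_of_comap_eq (φ₁ φ₂ : B →ₐ[A] C) (q : Ideal C) [q.IsPrime]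
    (hq : q.comap φ₁ = q.comap φ₂)
    (hsurj : Function.Surjective (residueFieldMap (algebraMap A B) (q.comap φ₁))) (b : B) :
    φ₁ b - φ₂ b ∈ q := by
  obtain ⟨a, s, hs, hmem⟩ := exists_mul_sub_mem_of_surjective_residueFieldMap _ _ hsurj b
  have h₁ : φ₁ b * algebraMap A C s - algebraMap A C a ∈ q := by
    simpa only [Ideal.mem_comap, map_sub, map_mul, AlgHom.commutes] using hmem
  have h₂ : φ₂ b * algebraMap A C s - algebraMap A C a ∈ q := by
    rw [hq] at hmem
    simpa only [Ideal.mem_comap, map_sub, map_mul, AlgHom.commutes] using hmem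
  have hs' : algebraMap A C s ∉ q := by
    simpa only [Ideal.mem_comap, AlgHom.commutes] using hs
  have hdiff : (φ₁ b - φ₂ b) * algebraMap A C s ∈ q := by
    convert q.sub_mem h₁ h₂ using 1
    ring
  exact (Ideal.IsPrime.mem_or_mem ‹_› hdiff).resolve_right hs'

theorem isNilpotent_sub_of_injective_primeSpectrum_comap
    (hspec : Function.Injective (PrimeSpectrum.comap (algebraMap A B)))
    (hres : ∀ (p : Ideal B) [p.IsPrime], Function.Surjective (residueFieldMap (algebraMap A B) p))
    (φ₁ φ₂ : B →ₐ[A] C) (b : B) : IsNilpotent (φ₁ b - φ₂ b) :=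
  nilpotent_iff_mem_prime.mpr fun q _ ↦
    sub_mem_of_comap_eq φ₁ φ₂ q (comap_eq_of_injective_primeSpectrum_comap hspec φ₁ φ₂ q)
      (hres _) b

end Radicial

theorem subintegral_imp_saturation_top_general {A B : Type*} [CommRing A] [CommRing B]
    [Algebra A B]
    (hspec : Function.Bijective (PrimeSpectrum.comap (algebraMap A B)))
    (hres : Equiresidual (algebraMap A B)) :
    ∀ b : B, IsNilpotent (b ⊗ₜ[A] (1 : B) - (1 : B) ⊗ₜ[A] b) :=
  isNilpotent_sub_of_injective_primeSpectrum_comap hspec.1 (fun p hp ↦ (hres p hp).2)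
    (Algebra.TensorProduct.includeLeft : B →ₐ[A] B ⊗[A] B) Algebra.TensorProduct.includeRight

/-- If `A → B` is a subintegral extension (integral, bijective on prime spectra, and
equiresidual) with `B` a domain, then `b ⊗ 1 - 1 ⊗ b` is nilpotent in `B ⊗[A] B` for
every `b ∈ B`, i.e. `B` is its own saturation over `A`. -/
theorem subintegral_imp_saturation_top {A B : Type*} [CommRing A] [CommRing B] [IsDomain B]
    [Algebra A B] (hinj : Function.Injective (algebraMap A B))
    [Algebra.IsIntegral A B]
    (hspec : Function.Bijective (PrimeSpectrum.comap (algebraMap A B)))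
    (hres : Equiresidual (algebraMap A B)) :
    ∀ b : B, IsNilpotent (b ⊗ₜ[A] (1 : B) - (1 : B) ⊗ₜ[A] b) :=
  subintegral_imp_saturation_top_general hspec hres
end

section
/- Let A → C → B be ring extensions with A → C subintegral and C → B arbitrary. Then for every field K, any two ring homomorphisms B → K agreeing on A agree on C. -/
open TensorProduct

theorem homs_agree_key {A C : Type*} [CommRing A] [CommRing C] [Algebra A C]
    (hspec : Function.Bijective (PrimeSpectrum.comap (algebraMap A C)))
    (hres : Equiresidual (algebraMap A C))
    (K : Type*) [Field K] (φ₁ φ₂ : C →+* K)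
    (h : φ₁.comp (algebraMap A C) = φ₂.comp (algebraMap A C)) : φ₁ = φ₂ := by
  set f := algebraMap A C with hf
  haveI hp1 : (RingHom.ker φ₁).IsPrime := RingHom.ker_isPrime φ₁
  haveI hp2 : (RingHom.ker φ₂).IsPrime := RingHom.ker_isPrime φ₂
  have hker : RingHom.ker φ₂ = RingHom.ker φ₁ := by
    have heq : (⟨RingHom.ker φ₂, hp2⟩ : PrimeSpectrum C) = ⟨RingHom.ker φ₁, hp1⟩ := by
      apply hspec.injective
      apply PrimeSpectrum.ext
      show (RingHom.ker φ₂).comap f = (RingHom.ker φ₁).comap f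
      rw [RingHom.comap_ker, RingHom.comap_ker, h]
    exact congrArg PrimeSpectrum.asIdeal heq
  set p := RingHom.ker φ₁ with hpdef
  set q := p.comap f with hqdef
  have hU₁ : ∀ s : p.primeCompl, IsUnit (φ₁ s) := fun s =>
    isUnit_iff_ne_zero.2 (fun hz => s.2 hz)
  have hU₂ : ∀ s : p.primeCompl, IsUnit (φ₂ s) := fun s =>
    isUnit_iff_ne_zero.2 (fun hz => s.2 (show (s : C) ∈ p by
      have hmem : (s : C) ∈ RingHom.ker φ₂ := RingHom.mem_ker.mpr hz
      rwa [hker] at hmem))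
  set l₁ : Localization.AtPrime p →+* K := IsLocalization.lift hU₁ with hl₁
  set l₂ : Localization.AtPrime p →+* K := IsLocalization.lift hU₂ with hl₂
  have hml : ∀ (φ : C →+* K) (hU : ∀ s : p.primeCompl, IsUnit (φ s)),
      RingHom.ker φ = p →
      IsLocalRing.maximalIdeal (Localization.AtPrime p) ≤
        RingHom.ker (IsLocalization.lift (S := Localization.AtPrime p) hU) := by
    intro φ hU hk
    rw [← Localization.AtPrime.map_eq_maximalIdeal, Ideal.map_le_iff_le_comap]
    intro x hx
    show IsLocalization.lift hU (algebraMap C _ x) = 0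
    rw [IsLocalization.lift_eq]
    rw [← hk] at hx
    exact hx
  have hloc : ∀ (φ : C →+* K) (hU : ∀ s : p.primeCompl, IsUnit (φ s)),
      RingHom.ker φ = p →
      IsLocalHom (IsLocalization.lift (S := Localization.AtPrime p) hU) := by
    intro φ hU hk
    constructor
    intro a ha
    by_contra hna
    have h0 := hml φ hU hk ((IsLocalRing.mem_maximalIdeal a).2 hna)
    rw [RingHom.mem_ker] at h0
    rw [h0] at ha
    exact not_isUnit_zero ha
  haveI hloc₁ : IsLocalHom l₁ := hloc φ₁ hU₁ rfl
  haveI hloc₂ : IsLocalHom l₂ := hloc φ₂ hU₂ hker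
  set r₁ := IsLocalRing.ResidueField.lift l₁ with hr₁
  set r₂ := IsLocalRing.ResidueField.lift l₂ with hr₂
  -- the two composites with the residue field map agree
  have hcomm : ∀ (φ : C →+* K) (hU : ∀ s : p.primeCompl, IsUnit (φ s))
      (hlh : IsLocalHom (IsLocalization.lift (S := Localization.AtPrime p) hU)) (a : A),
      (IsLocalRing.ResidueField.lift (IsLocalization.lift (S := Localization.AtPrime p) hU))
        (residueFieldMap f p (IsLocalRing.residue _ (algebraMap A (Localization.AtPrime q) a)))
        = φ (f a) := by
    intro φ hU hlh a
    unfold residueFieldMap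
    rw [IsLocalRing.ResidueField.map_residue, Localization.localRingHom_to_map,
      IsLocalRing.ResidueField.lift_residue_apply, IsLocalization.lift_eq]
  have hEq : r₁.comp (residueFieldMap f p) = r₂.comp (residueFieldMap f p) := by
    have hsur : Function.Surjective (IsLocalRing.residue (Localization.AtPrime q)) :=
      Ideal.Quotient.mk_surjective
    have hinner : (r₁.comp (residueFieldMap f p)).comp
        (IsLocalRing.residue (Localization.AtPrime q)) =
        (r₂.comp (residueFieldMap f p)).comp
        (IsLocalRing.residue (Localization.AtPrime q)) := by
      apply IsLocalization.ringHom_ext q.primeCompl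
      apply RingHom.ext
      intro a
      show r₁ (residueFieldMap f p (IsLocalRing.residue _ (algebraMap A _ a)))
        = r₂ (residueFieldMap f p (IsLocalRing.residue _ (algebraMap A _ a)))
      rw [hr₁, hr₂, hcomm φ₁ hU₁ hloc₁ a, hcomm φ₂ hU₂ hloc₂ a]
      exact RingHom.congr_fun h a
    apply RingHom.ext
    intro x
    obtain ⟨y, rfl⟩ := hsur x
    exact RingHom.congr_fun hinner y
  have hr : r₁ = r₂ := by
    apply RingHom.ext
    intro x
    obtain ⟨y, rfl⟩ := (hres p hp1).surjective x
    exact RingHom.congr_fun hEq y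
  apply RingHom.ext
  intro c
  have h₁ : φ₁ c = r₁ (IsLocalRing.residue _ (algebraMap C (Localization.AtPrime p) c)) := by
    rw [hr₁, IsLocalRing.ResidueField.lift_residue_apply, hl₁, IsLocalization.lift_eq]
  have h₂ : φ₂ c = r₂ (IsLocalRing.residue _ (algebraMap C (Localization.AtPrime p) c)) := by
    rw [hr₂, IsLocalRing.ResidueField.lift_residue_apply, hl₂, IsLocalization.lift_eq]
  rw [h₁, h₂, hr]

/-- If `A → C` is subintegral and `C → B` is an arbitrary extension, then any two
homomorphisms `B → K` into a field `K` agreeing on `A` agree on `C`. -/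
theorem homs_agree_of_subintegral {A B : Type*} [CommRing A] [CommRing B] [Algebra A B]
    (C : Subalgebra A B)
    (hint : Algebra.IsIntegral A C)
    (hspec : Function.Bijective (PrimeSpectrum.comap (algebraMap A C)))
    (hres : Equiresidual (algebraMap A C)) :
    ∀ (K : Type*) [Field K] (ψ₁ ψ₂ : B →+* K),
      ψ₁.comp (algebraMap A B) = ψ₂.comp (algebraMap A B) → ∀ c ∈ C, ψ₁ c = ψ₂ c := by
  intro K _ ψ₁ ψ₂ hψ c hc
  have key := homs_agree_key hspec hres K (ψ₁.comp C.subtype) (ψ₂.comp C.subtype) ?_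
  · exact RingHom.congr_fun key ⟨c, hc⟩
  · apply RingHom.ext
    intro a
    have h1 : C.subtype (algebraMap A C a) = algebraMap A B a := rfl
    show ψ₁ (C.subtype (algebraMap A C a)) = ψ₂ (C.subtype (algebraMap A C a))
    rw [h1]
    exact RingHom.congr_fun hψ a
end
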